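/- arXiv:1308.2471 — 2 statements merged into one kernel-verified Lean document; each statement's English description precedes it below -/
import Mathlib

section
/- For any graph G, the least t for which there exist linear orders L_1,...,L_t on V(G) satisfying: for all distinct vertices x, y, z with {y,z} an edge there is some i with x > y and x > z in L_i, is at least dim(P_G) − 1 and at most dim(P_G). -/
open SimpleGraph

/-- `x` is covered by `y` with respect to the order-like relation `le`. -/
def CovRel {α : Type*} (le : α → α → Prop) (x y : α) : Prop :=
  le x y ∧ x ≠ y ∧ ∀ z, le x z → le z y → z = x ∨ z = y

/-- The cover graph of (the poset given by) the relation `le`. -/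
def coverGraph {α : Type*} (le : α → α → Prop) : SimpleGraph α where
  Adj x y := CovRel le x y ∨ CovRel le y x
  symm := ⟨by intro x y h; tauto⟩
  loopless := ⟨by intro x h; rcases h with ⟨_, h2, _⟩ | ⟨_, h2, _⟩ <;> exact h2 rfl⟩

/-- A family of linear orders whose intersection is `le` (each is then a linear
extension of `le`). -/
def IsRealizer {α : Type*} (le : α → α → Prop) {t : ℕ} (L : Fin t → α → α → Prop) : Prop :=
  (∀ i, IsLinearOrder α (L i)) ∧ ∀ x y, le x y ↔ ∀ i, L i x y

/-- The order dimension of the poset given by `le`: the least positive size of a realizer. -/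
noncomputable def dimRel {α : Type*} (le : α → α → Prop) : ℕ :=
  sInf {t | 0 < t ∧ ∃ L : Fin t → α → α → Prop, IsRealizer le L}

/-- `x` lies strictly between `y` and `z` in the linear order (given as a `≤`-relation) `L`. -/
def StrictBtw {α : Type*} (L : α → α → Prop) (y x z : α) : Prop :=
  (L y x ∧ L x z ∧ x ≠ y ∧ x ≠ z) ∨ (L z x ∧ L x y ∧ x ≠ y ∧ x ≠ z)

/-- A family of linear orders witnessing the eye condition for `G`. -/
def IsEyeFamily {α : Type*} (G : SimpleGraph α) {s : ℕ} (L : Fin s → α → α → Prop) : Prop :=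
  (∀ i, IsLinearOrder α (L i)) ∧
  ∀ x y z : α, x ≠ y → x ≠ z → y ≠ z → G.Adj y z → ∃ i, ¬ StrictBtw (L i) y x z

/-- The eye parameter of a graph. -/
noncomputable def eye {α : Type*} (G : SimpleGraph α) : ℕ :=
  sInf {s | 0 < s ∧ ∃ L : Fin s → α → α → Prop, IsEyeFamily G L}

/-- Ground set of the incidence poset of `G`: vertices together with edges. -/
def IncGround {V : Type*} (G : SimpleGraph V) : Type _ := V ⊕ G.edgeSet

/-- The order of the incidence poset of `G`: vertices are minimal, edges are maximal,
and a vertex is below an edge exactly when it is one of its endpoints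
(i.e. inclusion order, viewing edges as 2-element vertex sets). -/
def incLE {V : Type*} (G : SimpleGraph V) : IncGround G → IncGround G → Prop
  | Sum.inl x, Sum.inl y => x = y
  | Sum.inl x, Sum.inr e => x ∈ (e : Sym2 V)
  | Sum.inr _, Sum.inl _ => False
  | Sum.inr e, Sum.inr f => e = f

/-- The dimension of the incidence poset of `G`. -/
noncomputable def incDim {V : Type*} (G : SimpleGraph V) : ℕ := dimRel (incLE G)

/-- A family of linear extensions of `le` such that whenever `z` covers both `x` and `y`,
some member puts `x` above `y`: an upper-cover realizer. -/
def IsUCRealizer {α : Type*} (le : α → α → Prop) {t : ℕ} (L : Fin t → α → α → Prop) : Prop :=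
  (∀ i, IsLinearOrder α (L i)) ∧ (∀ x y, le x y → ∀ i, L i x y) ∧
  ∀ z x y : α, CovRel le x z → CovRel le y z → x ≠ y → ∃ i, L i y x

/-- The upper cover dimension: least positive size of an upper-cover realizer. -/
noncomputable def dimUC {α : Type*} (le : α → α → Prop) : ℕ :=
  sInf {t | 0 < t ∧ ∃ L : Fin t → α → α → Prop, IsUCRealizer le L}

/-- The poset given by `le` has height exactly `r`. -/
def HeightEq {α : Type*} (le : α → α → Prop) (r : ℕ) : Prop :=
  (∃ c : Finset α, IsChain le (c : Set α) ∧ c.card = r) ∧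
  ∀ c : Finset α, IsChain le (c : Set α) → c.card ≤ r

/-!
Restricting a realizer of `P_G` to the vertices gives such a family: if `x ∉ yz`, some member
puts the edge `yz` below `x`, hence both `y` and `z` below `x`.

Conversely, each vertex order `L` of the family induces the linear extension of `P_G` in which
every edge sits just above its `L`-larger end; if `y, z < x` in `L`, then `yz < x` there. These
extensions reverse every incomparable (vertex, edge) pair, and a single further extension, with
all vertices below all edges and one of the others reversed within each kind, reverses all
remaining incomparable pairs. So `dim P_G` is at most one more than the size of the family.
-/

open Function

section Lex

variable {α β γ : Type*}

lemma isStrictTotalOrder_and_ne (r : α → α → Prop) [IsLinearOrder α r] :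
    IsStrictTotalOrder α (fun a b => r a b ∧ a ≠ b) where
  irrefl _ h := h.2 rfl
  trans _ _ _ h₁ h₂ := ⟨trans_of r h₁.1 h₂.1, fun h => h₁.2 (antisymm_of r h₁.1 (h ▸ h₂.1))⟩
  trichotomous a b hab hba := by
    by_contra hne
    rcases total_of r a b with h | h
    · exact hab ⟨h, hne⟩
    · exact hba ⟨h, Ne.symm hne⟩

lemma isLinearOrder_prodLex_and_ne (r : β → β → Prop) (s : γ → γ → Prop) [IsLinearOrder β r]
    [IsLinearOrder γ s] : IsLinearOrder (β × γ) (Prod.Lex (fun a b => r a b ∧ a ≠ b) s) :=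
  have := isStrictTotalOrder_and_ne r
  {}

def Sum.lexDual (r : α ⊕ β → α ⊕ β → Prop) : α ⊕ β → α ⊕ β → Prop :=
  Sum.Lex (Function.swap r on Sum.inl) (Function.swap r on Sum.inr)

lemma Sum.isLinearOrder_lexDual (r : α ⊕ β → α ⊕ β → Prop) [IsLinearOrder (α ⊕ β) r] :
    IsLinearOrder (α ⊕ β) (Sum.lexDual r) :=
  have := Sum.inl_injective.isLinearOrder_onFun (Function.swap r)
  have := Sum.inr_injective.isLinearOrder_onFun (Function.swap r)
  show IsLinearOrder _ (Sum.Lex _ _) from {}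

lemma Sum.eq_or_inl_inr_of_lexDual {r : α ⊕ β → α ⊕ β → Prop} [Std.Antisymm r] {a b : α ⊕ β}
    (h : r a b) (hdual : Sum.lexDual r a b) : a = b ∨ ∃ x y, a = Sum.inl x ∧ b = Sum.inr y := by
  rcases hdual with ⟨hrev⟩ | ⟨hrev⟩ | ⟨x, y⟩
  · exact Or.inl (antisymm_of r h hrev)
  · exact Or.inl (antisymm_of r h hrev)
  · exact Or.inr ⟨x, y, rfl, rfl⟩

end Lex

namespace Sym2

variable {α : Type*} (r : α → α → Prop)

open scoped Classical in
noncomputable def maxBy (e : Sym2 α) : α :=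
  if r e.out.1 e.out.2 then e.out.2 else e.out.1

open scoped Classical in
noncomputable def minBy (e : Sym2 α) : α :=
  if r e.out.1 e.out.2 then e.out.1 else e.out.2

lemma mk_maxBy_minBy (e : Sym2 α) : s(maxBy r e, minBy r e) = e := by
  unfold maxBy minBy
  split
  · rw [eq_swap]
    exact e.out_eq
  · exact e.out_eq

lemma maxBy_mem (e : Sym2 α) : maxBy r e ∈ e := by
  simpa only [mk_maxBy_minBy] using mem_mk_left (maxBy r e) (minBy r e)

variable [Std.Total r] {e : Sym2 α} {x : α}

lemma le_maxBy (hx : x ∈ e) : r x (maxBy r e) := by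
  rw [← e.out_eq, mem_iff] at hx
  unfold maxBy
  split_ifs with h
  · rcases hx with rfl | rfl
    exacts [h, refl_of r _]
  · rcases hx with rfl | rfl
    exacts [refl_of r _, (total_of r _ _).resolve_left h]

lemma minBy_le (hx : x ∈ e) : r (minBy r e) x := by
  rw [← e.out_eq, mem_iff] at hx
  unfold minBy
  split_ifs with h
  · rcases hx with rfl | rfl
    exacts [refl_of r _, h]
  · rcases hx with rfl | rfl
    exacts [(total_of r _ _).resolve_left h, refl_of r _]

end Sym2

section IncidencePoset

variable {V : Type*} {G : SimpleGraph V}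

def IsAboveEdgeFamily (G : SimpleGraph V) {t : ℕ} (L : Fin t → V → V → Prop) : Prop :=
  (∀ i, IsLinearOrder V (L i)) ∧
    ∀ x y z : V, x ≠ y → x ≠ z → y ≠ z → G.Adj y z → ∃ i, L i y x ∧ L i z x

lemma incLE_refl (a : V ⊕ G.edgeSet) : incLE G a a := by
  rcases a with x | e <;> rfl

lemma eq_or_mem_of_incLE {a b : V ⊕ G.edgeSet} (h : incLE G a b) :
    a = b ∨ ∃ (x : V) (e : G.edgeSet), a = Sum.inl x ∧ b = Sum.inr e ∧ x ∈ (e : Sym2 V) := by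
  rcases a with x | e <;> rcases b with y | f
  · exact Or.inl (congrArg Sum.inl h)
  · exact Or.inr ⟨x, f, rfl, rfl, h⟩
  · exact h.elim
  · exact Or.inl (congrArg Sum.inr h)

lemma IsRealizer.isAboveEdgeFamily {t : ℕ} {M : Fin t → V ⊕ G.edgeSet → V ⊕ G.edgeSet → Prop}
    (hM : IsRealizer (incLE G) M) :
    IsAboveEdgeFamily G fun i => M i on Sum.inl := by
  obtain ⟨hlin, hiff⟩ := hM
  refine ⟨fun i => ?_, ?_⟩
  · have : IsLinearOrder (V ⊕ G.edgeSet) (M i) := hlin i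
    exact Sum.inl_injective.isLinearOrder_onFun _
  intro x y z hxy hxz _ hadj
  let e : G.edgeSet := ⟨s(y, z), hadj⟩
  have hxe : ¬ incLE G (Sum.inl x) (Sum.inr e) := by
    change x ∉ s(y, z)
    simp [hxy, hxz]
  obtain ⟨i, hi⟩ : ∃ i, ¬ M i (Sum.inl x) (Sum.inr e) := by
    by_contra! h
    exact hxe ((hiff _ _).2 h)
  have : IsLinearOrder (V ⊕ G.edgeSet) (M i) := hlin i
  have hex : M i (Sum.inr e) (Sum.inl x) := (total_of (M i) _ _).resolve_left hi
  have hye : M i (Sum.inl y) (Sum.inr e) :=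
    (hiff (Sum.inl y) (Sum.inr e)).1 (Sym2.mem_mk_left y z) i
  have hze : M i (Sum.inl z) (Sum.inr e) :=
    (hiff (Sum.inl z) (Sum.inr e)).1 (Sym2.mem_mk_right y z) i
  exact ⟨i, trans_of (M i) hye hex, trans_of (M i) hze hex⟩

lemma Sum.lexDual_of_incLE (r : V ⊕ G.edgeSet → V ⊕ G.edgeSet → Prop) [Std.Refl r]
    {a b : V ⊕ G.edgeSet} (h : incLE G a b) : Sum.lexDual r a b := by
  unfold Sum.lexDual
  obtain rfl | ⟨x, e, rfl, rfl, -⟩ := eq_or_mem_of_incLE h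
  · rcases a with x | e
    · exact Sum.Lex.inl (refl_of r _)
    · exact Sum.Lex.inr (refl_of r _)
  · exact Sum.Lex.sep x e

noncomputable def incKey (L : V → V → Prop) : V ⊕ G.edgeSet → V × V
  | .inl x => (x, x)
  | .inr e => (Sym2.maxBy L e, Sym2.minBy L e)

lemma incKey_injective (L : V → V → Prop) : Injective (incKey (G := G) L) := by
  rintro (x | ⟨e, he⟩) (y | ⟨f, hf⟩) h <;> simp only [incKey, Prod.mk.injEq] at h
  · exact congrArg Sum.inl h.1
  · rw [← Sym2.mk_maxBy_minBy L f, ← h.1, ← h.2] at hf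
    exact (G.loopless.irrefl x hf).elim
  · rw [← Sym2.mk_maxBy_minBy L e, h.1, h.2] at he
    exact (G.loopless.irrefl y he).elim
  · refine congrArg Sum.inr (Subtype.ext ?_)
    change e = f
    rw [← Sym2.mk_maxBy_minBy L e, h.1, h.2, Sym2.mk_maxBy_minBy]

/-- Edges with the same larger end are ordered by decreasing smaller end, so that a vertex comes
before the edges in which it is the larger end. -/
noncomputable def edgeAboveMax (L : V → V → Prop) : V ⊕ G.edgeSet → V ⊕ G.edgeSet → Prop :=
  Prod.Lex (fun a b => L a b ∧ a ≠ b) (swap L) on incKey L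

variable {L : V → V → Prop}

lemma isLinearOrder_edgeAboveMax [IsLinearOrder V L] :
    IsLinearOrder (V ⊕ G.edgeSet) (edgeAboveMax L) :=
  have := isLinearOrder_prodLex_and_ne L (swap L)
  (incKey_injective L).isLinearOrder_onFun _

lemma edgeAboveMax_of_incLE [IsLinearOrder V L] {a b : V ⊕ G.edgeSet} (h : incLE G a b) :
    edgeAboveMax L a b := by
  have := isLinearOrder_edgeAboveMax (G := G) (L := L)
  obtain rfl | ⟨x, e, rfl, rfl, hx⟩ := eq_or_mem_of_incLE h
  · exact refl_of _ _
  · by_cases hmax : x = Sym2.maxBy L e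
    · change Prod.Lex _ _ (x, x) (Sym2.maxBy L e, Sym2.minBy L e)
      rw [hmax]
      exact Prod.Lex.right _ (Sym2.minBy_le L (Sym2.maxBy_mem L e))
    · exact Prod.Lex.left _ _ ⟨Sym2.le_maxBy L hx, hmax⟩

lemma not_edgeAboveMax_inl_inr [IsLinearOrder V L] {x : V} {e : G.edgeSet}
    (hx : x ∉ (e : Sym2 V)) (habove : ∀ y ∈ (e : Sym2 V), L y x) :
    ¬ edgeAboveMax L (Sum.inl x) (Sum.inr e) := by
  have hmem := Sym2.maxBy_mem L (e : Sym2 V)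
  have hne : x ≠ Sym2.maxBy L e := fun h => hx (h ▸ hmem)
  rintro (⟨_, _, ⟨hle, -⟩⟩ | ⟨_, -⟩)
  · exact hne (antisymm_of L hle (habove _ hmem))
  · exact hne rfl

end IncidencePoset

section Realizer

variable {V : Type*} {G : SimpleGraph V} {t : ℕ} {L : Fin t → V → V → Prop}

noncomputable def aboveEdgeRealizer (G : SimpleGraph V) (L : Fin t → V → V → Prop) (i₀ : Fin t) :
    Fin (t + 1) → V ⊕ G.edgeSet → V ⊕ G.edgeSet → Prop :=
  Fin.cons (Sum.lexDual (edgeAboveMax (L i₀))) fun i => edgeAboveMax (L i)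

theorem IsAboveEdgeFamily.isRealizer (hL : IsAboveEdgeFamily G L) (i₀ : Fin t) :
    IsRealizer (incLE G) (aboveEdgeRealizer G L i₀) := by
  obtain ⟨hlin, habove⟩ := hL
  have hext (i : Fin t) : IsLinearOrder _ (edgeAboveMax (G := G) (L i)) :=
    have := hlin i
    isLinearOrder_edgeAboveMax
  refine ⟨fun j => ?_, fun a b => ⟨fun h j => ?_, fun h => ?_⟩⟩
  · cases j using Fin.cases with
    | zero => exact Sum.isLinearOrder_lexDual _
    | succ i => exact hext i
  · cases j using Fin.cases with
    | zero => exact Sum.lexDual_of_incLE _ h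
    | succ i =>
      have := hlin i
      exact edgeAboveMax_of_incLE h
  have := hext i₀
  obtain rfl | ⟨x, e, rfl, rfl⟩ :=
    Sum.eq_or_inl_inr_of_lexDual (r := edgeAboveMax (L i₀)) (h i₀.succ) (h 0)
  · exact incLE_refl a
  by_contra hx
  change x ∉ (e : Sym2 V) at hx
  obtain ⟨⟨y, z⟩, hyz⟩ := e
  obtain ⟨hxy, hxz⟩ : x ≠ y ∧ x ≠ z := by simpa [not_or] using hx
  obtain ⟨i, hyx, hzx⟩ := habove x y z hxy hxz (G.ne_of_adj hyz) hyz
  have := hlin i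
  refine not_edgeAboveMax_inl_inr hx ?_ (h i.succ)
  intro w hw
  rcases Sym2.mem_iff.1 hw with rfl | rfl
  exacts [hyx, hzx]

end Realizer

lemma Nat.sInf_le_sInf_and_sInf_le_sInf_add_one {A B : Set ℕ} (hAB : A ⊆ B)
    (hBA : ∀ t ∈ B, t + 1 ∈ A) : sInf B ≤ sInf A ∧ sInf A ≤ sInf B + 1 := by
  rcases B.eq_empty_or_nonempty with rfl | hB
  · simp [Set.subset_empty_iff.1 hAB]
  have hA : A.Nonempty := ⟨_, hBA _ (Nat.sInf_mem hB)⟩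
  exact ⟨Nat.sInf_le (hAB (Nat.sInf_mem hA)), Nat.sInf_le (hBA _ (Nat.sInf_mem hB))⟩

theorem stmt_14_general {V : Type*} (G : SimpleGraph V) :
    incDim G - 1 ≤ sInf {t | 0 < t ∧ ∃ L : Fin t → V → V → Prop,
        (∀ i, IsLinearOrder V (L i)) ∧
        (∀ x y z : V, x ≠ y → x ≠ z → y ≠ z → G.Adj y z → ∃ i, L i y x ∧ L i z x)} ∧
    sInf {t | 0 < t ∧ ∃ L : Fin t → V → V → Prop,
        (∀ i, IsLinearOrder V (L i)) ∧
        (∀ x y z : V, x ≠ y → x ≠ z → y ≠ z → G.Adj y z → ∃ i, L i y x ∧ L i z x)}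
      ≤ incDim G := by
  obtain ⟨hle, hge⟩ := Nat.sInf_le_sInf_and_sInf_le_sInf_add_one
    (A := {t | 0 < t ∧ ∃ M : Fin t → IncGround G → IncGround G → Prop, IsRealizer (incLE G) M})
    (B := {t | 0 < t ∧ ∃ L : Fin t → V → V → Prop, IsAboveEdgeFamily G L})
    (fun _ ⟨ht, _, hM⟩ => ⟨ht, _, hM.isAboveEdgeFamily⟩)
    (fun t ⟨ht, _, hL⟩ => ⟨t.succ_pos, _, hL.isRealizer ⟨0, ht⟩⟩)
  exact ⟨Nat.sub_le_of_le_add hge, hle⟩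

/-- For any graph `G`, the least positive `t` admitting linear orders on `V(G)` satisfying
the edge-covering condition lies between `dim(P_G) − 1` and `dim(P_G)`. -/
theorem stmt_14 {V : Type*} [Fintype V] (G : SimpleGraph V) :
    incDim G - 1 ≤ sInf {t | 0 < t ∧ ∃ L : Fin t → V → V → Prop,
        (∀ i, IsLinearOrder V (L i)) ∧
        (∀ x y z : V, x ≠ y → x ≠ z → y ≠ z → G.Adj y z → ∃ i, L i y x ∧ L i z x)} ∧
    sInf {t | 0 < t ∧ ∃ L : Fin t → V → V → Prop,
        (∀ i, IsLinearOrder V (L i)) ∧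
        (∀ x y z : V, x ≠ y → x ≠ z → y ≠ z → G.Adj y z → ∃ i, L i y x ∧ L i z x)}
      ≤ incDim G :=
  stmt_14_general G
end

section
/- For every r ≥ 1, there exists a poset P of height exactly r whose cover graph is triangle-free and has chromatic number exactly r; moreover r is the minimum possible height for such a poset. -/
open SimpleGraph

/-!
The example is Zykov's construction, transported to posets: `ZykovPoset (n + 1)` consists of
`n` disjoint copies of `ZykovPoset n` together with a new maximal element above every
transversal, covering exactly the chosen element of each copy. Two neighbours of a new element
that are adjacent to each other would have to be the same element, so no triangle appears. A
colouring with `n` colours uses every colour on every copy; choosing in copy `i` an element of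
colour `i` gives a transversal whose top has no colour left. Each step raises the height by one.

Conversely, colouring each element by its height is a proper colouring of the cover graph,
because `x ⋖ y` forces `height x < height y`; hence the chromatic number of the cover graph is
at most the maximal size of a chain.
-/

open Order

section CoverGraph

variable {α : Type*} [PartialOrder α]

theorem covRel_iff_covBy {x y : α} : CovRel (· ≤ ·) x y ↔ x ⋖ y := by
  refine ⟨fun ⟨hxy, hne, hbtw⟩ => ⟨lt_of_le_of_ne hxy hne, fun z hxz hzy => ?_⟩,
    fun h => ⟨h.le, h.ne, fun z hxz hzy => ?_⟩⟩
  · rcases hbtw z hxz.le hzy.le with rfl | rfl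
    exacts [lt_irrefl _ hxz, lt_irrefl _ hzy]
  · rcases hxz.eq_or_lt with rfl | hxz
    · exact .inl rfl
    rcases hzy.eq_or_lt with rfl | hzy
    · exact .inr rfl
    exact (h.2 hxz hzy).elim

theorem coverGraph_adj {x y : α} :
    (coverGraph (α := α) (· ≤ ·)).Adj x y ↔ x ⋖ y ∨ y ⋖ x := by
  simp only [coverGraph, covRel_iff_covBy]

theorem exists_isChain_card_eq_of_le_height {x : α} {m : ℕ} (h : (m : ℕ∞) ≤ height x) :
    ∃ c : Finset α, IsChain (· ≤ ·) (c : Set α) ∧ c.card = m + 1 := by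
  classical
  obtain ⟨p, -, hp⟩ := exists_series_of_le_height x h
  refine ⟨Finset.univ.image p, ?_, ?_⟩
  · rw [Finset.coe_image, Finset.coe_univ, Set.image_univ]
    exact p.strictMono.monotone.isChain_range
  · rw [Finset.card_image_of_injective _ p.strictMono.injective, Finset.card_univ,
      Fintype.card_fin, hp]

theorem height_lt_of_forall_isChain_card_le {n : ℕ}
    (h : ∀ c : Finset α, IsChain (· ≤ ·) (c : Set α) → c.card ≤ n) (x : α) :
    height x < n := by
  by_contra! hx
  obtain ⟨c, hc, hcard⟩ := exists_isChain_card_eq_of_le_height hx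
  have := h c hc
  omega

theorem exists_strictMono_fin_of_forall_height_lt {n : ℕ} (h : ∀ x : α, height x < n) :
    ∃ k : α → Fin n, StrictMono k := by
  have hfin (x : α) : height x ≠ ⊤ := ((h x).trans (ENat.natCast_lt_top n)).ne
  refine ⟨fun x => ⟨(height x).toNat, ?_⟩, fun x y hxy => ?_⟩
  · exact_mod_cast (ENat.natCast_toNat (hfin x)).trans_lt (h x)
  · have := height_strictMono hxy (lt_top_iff_ne_top.mpr (hfin x))
    rw [← ENat.natCast_toNat (hfin x), ← ENat.natCast_toNat (hfin y)] at this
    exact Fin.mk_lt_mk.mpr (by exact_mod_cast this)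

theorem coverGraph_colorable_of_forall_height_lt {n : ℕ} (h : ∀ x : α, height x < n) :
    (coverGraph (α := α) (· ≤ ·)).Colorable n := by
  obtain ⟨k, hk⟩ := exists_strictMono_fin_of_forall_height_lt h
  refine ⟨.mk k fun {x y} hxy => ?_⟩
  rcases coverGraph_adj.mp hxy with hxy | hxy
  exacts [(hk hxy.lt).ne, (hk hxy.lt).ne']

theorem card_le_of_forall_height_lt {n : ℕ} (h : ∀ x : α, height x < n) {c : Finset α}
    (hc : IsChain (· ≤ ·) (c : Set α)) : c.card ≤ n := by
  obtain ⟨k, hk⟩ := exists_strictMono_fin_of_forall_height_lt h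
  have hinj : Set.InjOn k c := by
    intro x hx y hy hxy
    by_contra hne
    rcases hc hx hy hne with hle | hle
    exacts [(hk (hle.lt_of_ne hne)).ne hxy, (hk (hle.lt_of_ne (Ne.symm hne))).ne' hxy]
  simpa using Finset.card_le_card_of_injOn k (fun x _ => Finset.mem_univ (k x)) hinj

theorem exists_isChain_chromaticNumber_le [Finite α] :
    ∃ c : Finset α, IsChain (· ≤ ·) (c : Set α) ∧
      (coverGraph (α := α) (· ≤ ·)).chromaticNumber ≤ c.card := by
  classical
  have := Fintype.ofFinite α
  obtain ⟨c, hc, hmax⟩ :=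
    (Finset.univ.filter fun c : Finset α => IsChain (· ≤ ·) (c : Set α)).exists_max_image
      Finset.card ⟨∅, by simp⟩
  simp only [Finset.mem_filter, Finset.mem_univ, true_and] at hc hmax
  exact ⟨c, hc, (coverGraph_colorable_of_forall_height_lt
    (height_lt_of_forall_isChain_card_le hmax)).chromaticNumber_le⟩

end CoverGraph

/-- Zykov's construction for posets: copies of `P` indexed by `ι`, and for every transversal
`f : ι → P` a new element `top f` covering `f i` in the `i`-th copy. -/
inductive ZykovExt (P : Type*) (ι : Type*)
  | copy (i : ι) (x : P)
  | top (f : ι → P)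

namespace ZykovExt

variable {P ι : Type*}

instance [Finite P] [Finite ι] : Finite (ZykovExt P ι) :=
  Finite.of_injective (β := (ι × P) ⊕ (ι → P))
    (fun | copy i x => .inl (i, x) | top f => .inr f)
    (by rintro (_ | _) (_ | _) h <;> simp_all)

variable [PartialOrder P]

instance : PartialOrder (ZykovExt P ι) where
  le
    | copy i x, copy j y => i = j ∧ x ≤ y
    | copy i x, top f => x ≤ f i
    | top _, copy _ _ => False
    | top f, top g => f = g
  le_refl
    | copy _ _ => ⟨rfl, le_rfl⟩
    | top _ => rfl
  le_trans
    | copy _ _, copy _ _, copy _ _, ⟨rfl, hxy⟩, ⟨rfl, hyz⟩ => ⟨rfl, hxy.trans hyz⟩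
    | copy _ _, copy _ _, top _, ⟨rfl, hxy⟩, hyf => hxy.trans hyf
    | copy _ _, top _, top _, hxf, rfl => hxf
    | top _, top _, top _, rfl, rfl => rfl
  le_antisymm
    | copy _ _, copy _ _, ⟨rfl, hxy⟩, ⟨_, hyx⟩ => by rw [hxy.antisymm hyx]
    | top _, top _, rfl, _ => rfl

variable {i j : ι} {x y : P} {f g : ι → P}

@[simp] theorem copy_le_copy : copy i x ≤ copy j y ↔ i = j ∧ x ≤ y := Iff.rfl

@[simp] theorem copy_le_top : copy i x ≤ top f ↔ x ≤ f i := Iff.rfl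

@[simp] theorem not_top_le_copy : ¬ top f ≤ copy i x := id

@[simp] theorem copy_lt_copy : copy i x < copy j y ↔ i = j ∧ x < y := by
  simp only [lt_iff_le_not_ge, copy_le_copy]
  grind

@[simp] theorem copy_lt_top : copy i x < top f ↔ x ≤ f i := by
  simp [lt_iff_le_not_ge]

theorem isMax_top : IsMax (top f : ZykovExt P ι) := by
  rintro (_ | _) h
  exacts [h.elim, h.symm ▸ le_rfl]

theorem copy_strictMono (i : ι) : StrictMono (copy i : P → ZykovExt P ι) :=
  fun _ _ hxy => copy_lt_copy.mpr ⟨rfl, hxy⟩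

theorem copy_covBy_copy : copy i x ⋖ copy j y ↔ i = j ∧ x ⋖ y := by
  constructor
  · rintro ⟨hlt, hbtw⟩
    obtain ⟨rfl, hxy⟩ := copy_lt_copy.mp hlt
    exact ⟨rfl, hxy, fun z hxz hzy => hbtw (copy_strictMono i hxz) (copy_strictMono i hzy)⟩
  · rintro ⟨rfl, hxy, hbtw⟩
    refine ⟨copy_strictMono i hxy, fun c hxc hcy => ?_⟩
    cases c with
    | copy k z =>
      obtain ⟨rfl, hxz⟩ := copy_lt_copy.mp hxc
      exact hbtw hxz (copy_lt_copy.mp hcy).2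
    | top g => exact not_top_le_copy hcy.le

theorem copy_covBy_top : copy i x ⋖ top f ↔ x = f i := by
  constructor
  · rintro ⟨hlt, hbtw⟩
    refine (copy_lt_top.mp hlt).eq_of_not_lt fun hx => ?_
    exact hbtw (copy_strictMono i hx) (copy_lt_top.mpr le_rfl)
  · rintro rfl
    refine ⟨copy_lt_top.mpr le_rfl, fun c hxc hcf => ?_⟩
    cases c with
    | copy k z =>
      obtain ⟨rfl, hxz⟩ := copy_lt_copy.mp hxc
      exact hxz.not_ge (copy_lt_top.mp hcf)
    | top g => exact isMax_top.not_lt hcf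

theorem not_top_covBy {a : ZykovExt P ι} : ¬ top f ⋖ a :=
  fun h => isMax_top.not_lt h.lt

theorem adj_copy_copy :
    (coverGraph (α := ZykovExt P ι) (· ≤ ·)).Adj (copy i x) (copy j y) ↔
      i = j ∧ (coverGraph (α := P) (· ≤ ·)).Adj x y := by
  simp only [coverGraph_adj, copy_covBy_copy]
  grind

theorem adj_copy_top :
    (coverGraph (α := ZykovExt P ι) (· ≤ ·)).Adj (copy i x) (top f) ↔ x = f i := by
  simp [coverGraph_adj, copy_covBy_top, not_top_covBy]

theorem adj_top_copy :
    (coverGraph (α := ZykovExt P ι) (· ≤ ·)).Adj (top f) (copy i x) ↔ x = f i :=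
  adj_comm _ _ _ |>.trans adj_copy_top

theorem not_adj_top_top :
    ¬ (coverGraph (α := ZykovExt P ι) (· ≤ ·)).Adj (top f) (top g) := by
  simp [coverGraph_adj, not_top_covBy]

theorem not_adj_of_adj_top {f : ι → P} {u v : ZykovExt P ι}
    (hu : (coverGraph (· ≤ ·)).Adj (top f) u) (hv : (coverGraph (· ≤ ·)).Adj (top f) v) :
    ¬ (coverGraph (· ≤ ·)).Adj u v := by
  rcases u with ⟨i, x⟩ | g
  · rcases v with ⟨j, y⟩ | h
    · rintro huv
      obtain ⟨rfl, hxy⟩ := adj_copy_copy.mp huv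
      rw [adj_top_copy.mp hu, adj_top_copy.mp hv] at hxy
      exact hxy.ne rfl
    · exact (not_adj_top_top hv).elim
  · exact (not_adj_top_top hu).elim

theorem cliqueFree_three (hP : (coverGraph (α := P) (· ≤ ·)).CliqueFree 3) :
    (coverGraph (α := ZykovExt P ι) (· ≤ ·)).CliqueFree 3 := by
  classical
  intro s hs
  obtain ⟨a, b, c, hab, hac, hbc, -⟩ := is3Clique_iff.mp hs
  rcases a with ⟨i, x⟩ | f
  · rcases b with ⟨j, y⟩ | g
    · rcases c with ⟨k, z⟩ | h
      · obtain ⟨rfl, hxy⟩ := adj_copy_copy.mp hab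
        obtain ⟨rfl, hxz⟩ := adj_copy_copy.mp hac
        exact hP _ (is3Clique_triple_iff.mpr ⟨hxy, hxz, (adj_copy_copy.mp hbc).2⟩)
      · exact not_adj_of_adj_top hac.symm hbc.symm hab
    · exact not_adj_of_adj_top hab.symm hbc hac
  · exact not_adj_of_adj_top hab hac hbc

theorem isEmpty_coloring_of_forall_surjective
    (hP : ∀ C : (coverGraph (α := P) (· ≤ ·)).Coloring ι, Function.Surjective C) :
    IsEmpty ((coverGraph (α := ZykovExt P ι) (· ≤ ·)).Coloring ι) := by
  refine ⟨fun C => ?_⟩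
  have hcopy (i : ι) : Function.Surjective fun x => C (copy i x) :=
    hP (.mk _ fun hxy => C.valid (adj_copy_copy.mpr ⟨rfl, hxy⟩))
  choose v hv using fun i => hcopy i i
  exact C.valid (adj_copy_top (i := C (top v)).mpr rfl) (hv _)

theorem card_add_one_le_chromaticNumber [Fintype ι]
    (hP : (Fintype.card ι : ℕ∞) ≤ (coverGraph (α := P) (· ≤ ·)).chromaticNumber) :
    (Fintype.card ι + 1 : ℕ∞) ≤
      (coverGraph (α := ZykovExt P ι) (· ≤ ·)).chromaticNumber := by
  have := isEmpty_coloring_of_forall_surjective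
    (card_le_chromaticNumber_iff_forall_surjective.mp hP)
  refine Order.add_one_le_of_lt (lt_of_not_ge fun h => ?_)
  exact this.false ((chromaticNumber_le_iff_colorable.mp h).toColoring le_rfl)

def toWithTop : ZykovExt P ι → WithTop P
  | copy _ x => x
  | top _ => ⊤

theorem toWithTop_strictMono : StrictMono (toWithTop : ZykovExt P ι → WithTop P) := by
  rintro (⟨i, x⟩ | f) (⟨j, y⟩ | g) hab
  · exact WithTop.coe_lt_coe.mpr (copy_lt_copy.mp hab).2
  · exact WithTop.coe_lt_top x
  · exact (isMax_top.not_lt hab).elim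
  · exact (isMax_top.not_lt hab).elim

theorem height_copy_le (i : ι) (x : P) : height (copy i x : ZykovExt P ι) ≤ height x := by
  simpa [toWithTop] using height_le_height_apply_of_strictMono _ toWithTop_strictMono (copy i x)

theorem height_le_of_forall_height_lt {n : ℕ} (hP : ∀ x : P, height x < n)
    (a : ZykovExt P ι) : height a ≤ n := by
  have hcopy (i : ι) (x : P) : height (copy i x : ZykovExt P ι) < n :=
    (height_copy_le i x).trans_lt (hP x)
  cases a with
  | copy i x => exact (hcopy i x).le
  | top f =>
    refine height_le_coe_iff.mpr ?_
    rintro (⟨i, x⟩ | g) hlt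
    exacts [hcopy i x, (isMax_top.not_lt hlt).elim]

theorem height_add_one_le_height_top (f : ι → P) (i : ι) :
    height (f i) + 1 ≤ height (top f : ZykovExt P ι) :=
  calc height (f i) + 1 ≤ height (copy i (f i) : ZykovExt P ι) + 1 := by
        gcongr; exact height_le_height_apply_of_strictMono _ (copy_strictMono i) (f i)
    _ ≤ height (top f : ZykovExt P ι) := height_add_one_le (copy_lt_top.mpr le_rfl)

end ZykovExt

/-- `ZykovPoset 1` is a single point, the top over the empty transversal. -/
def ZykovPoset : ℕ → Type
  | 0 => Empty
  | n + 1 => ZykovExt (ZykovPoset n) (Fin n)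

namespace ZykovPoset

instance instPartialOrder : ∀ n, PartialOrder (ZykovPoset n)
  | 0 => inferInstanceAs (PartialOrder Empty)
  | n + 1 => letI := instPartialOrder n; inferInstanceAs (PartialOrder (ZykovExt _ _))

instance instFinite : ∀ n, Finite (ZykovPoset n)
  | 0 => inferInstanceAs (Finite Empty)
  | n + 1 => letI := instFinite n; inferInstanceAs (Finite (ZykovExt _ _))

theorem height_lt : ∀ (n : ℕ) (x : ZykovPoset n), height x < n
  | 0, x => x.elim
  | n + 1, x =>
    (ZykovExt.height_le_of_forall_height_lt (height_lt n) x).trans_lt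
      (by exact_mod_cast n.lt_succ_self)

theorem exists_le_height : ∀ n : ℕ, ∃ x : ZykovPoset (n + 1), n ≤ height x
  | 0 => ⟨ZykovExt.top finZeroElim, by simp⟩
  | n + 1 => by
    obtain ⟨x, hx⟩ := exists_le_height n
    refine ⟨ZykovExt.top fun _ : Fin (n + 1) => x, ?_⟩
    have := ZykovExt.height_add_one_le_height_top (fun _ : Fin (n + 1) => x) 0
    exact le_trans (by push_cast; gcongr) this

theorem heightEq (n : ℕ) : HeightEq (α := ZykovPoset n) (· ≤ ·) n := by
  refine ⟨?_, fun c hc => card_le_of_forall_height_lt (height_lt n) hc⟩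
  cases n with
  | zero => exact ⟨∅, by simp⟩
  | succ n =>
    obtain ⟨x, hx⟩ := exists_le_height n
    exact exists_isChain_card_eq_of_le_height hx

theorem cliqueFree_three_coverGraph :
    ∀ n, (coverGraph (α := ZykovPoset n) (· ≤ ·)).CliqueFree 3
  | 0 => fun s hs => by
    have : IsEmpty (ZykovPoset 0) := inferInstanceAs (IsEmpty Empty)
    simpa [Finset.eq_empty_of_isEmpty s] using hs.card_eq
  | n + 1 => ZykovExt.cliqueFree_three (cliqueFree_three_coverGraph n)

theorem le_chromaticNumber_coverGraph :
    ∀ n : ℕ, (n : ℕ∞) ≤ (coverGraph (α := ZykovPoset n) (· ≤ ·)).chromaticNumber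
  | 0 => by simp
  | n + 1 => by
    have := ZykovExt.card_add_one_le_chromaticNumber (ι := Fin n)
      (by simpa using le_chromaticNumber_coverGraph n)
    rw [Fintype.card_fin] at this
    exact_mod_cast this

theorem chromaticNumber_coverGraph (n : ℕ) :
    (coverGraph (α := ZykovPoset n) (· ≤ ·)).chromaticNumber = n :=
  (coverGraph_colorable_of_forall_height_lt (height_lt n)).chromaticNumber_le.antisymm
    (le_chromaticNumber_coverGraph n)

end ZykovPoset

theorem stmt_18_general (r : ℕ) :
    (∃ (α : Type) (_ : Fintype α) (le : α → α → Prop),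
      IsPartialOrder α le ∧ HeightEq le r ∧
      (coverGraph le).CliqueFree 3 ∧
      (coverGraph le).chromaticNumber = (r : ℕ∞)) ∧
    (∀ (α : Type) (le : α → α → Prop), Fintype α → IsPartialOrder α le →
      (coverGraph le).chromaticNumber = (r : ℕ∞) →
      ∃ c : Finset α, IsChain le (c : Set α) ∧ r ≤ c.card) := by
  refine ⟨⟨ZykovPoset r, Fintype.ofFinite _, (· ≤ ·), inferInstance, ZykovPoset.heightEq r,
    ZykovPoset.cliqueFree_three_coverGraph r, ZykovPoset.chromaticNumber_coverGraph r⟩, ?_⟩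
  intro α le _ hle hχ
  let : PartialOrder α :=
    { le := le, le_refl := hle.refl, le_trans := hle.trans, le_antisymm := hle.antisymm }
  obtain ⟨c, hc, hcχ⟩ := exists_isChain_chromaticNumber_le (α := α)
  exact ⟨c, hc, by exact_mod_cast hχ ▸ hcχ⟩

/-- For every `r ≥ 1` there is a finite poset of height exactly `r` whose cover graph is
triangle-free with chromatic number exactly `r`; moreover `r` is the minimum possible
height: any finite poset whose cover graph has chromatic number `r` has a chain of size
at least `r`. -/
theorem stmt_18 (r : ℕ) (hr : 1 ≤ r) :
    (∃ (α : Type) (_ : Fintype α) (le : α → α → Prop),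
      IsPartialOrder α le ∧ HeightEq le r ∧
      (coverGraph le).CliqueFree 3 ∧
      (coverGraph le).chromaticNumber = (r : ℕ∞)) ∧
    (∀ (α : Type) (le : α → α → Prop), Fintype α → IsPartialOrder α le →
      (coverGraph le).chromaticNumber = (r : ℕ∞) →
      ∃ c : Finset α, IsChain le (c : Set α) ∧ r ≤ c.card) :=
  stmt_18_general r
end
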